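/- For every positive integer n there exists a prime l with n < l ≤ 2n (Bertrand's postulate); consequently, for each n and each m < n/2 there exists a lattice of rank n with center density at least m^{n/2} / (2^{m-1+n/2} · n^{m-1} · (n+1)^{1/2}). -/

import Mathlib

open Finset

noncomputable def derAt1 (n i : ℕ) : (Fin (n + 1) → ℤ) →ₗ[ℤ] ℤ :=
  ∑ j : Fin (n + 1), (((j : ℕ).descFactorial i : ℤ)) • LinearMap.proj j

noncomputable def craigLat (n m l : ℕ) : Submodule ℤ (Fin (n + 1) → ℤ) :=
  LinearMap.ker (derAt1 n 0) ⊓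
    ⨅ i ∈ Finset.Ioo 0 m, Submodule.comap (derAt1 n i) (Ideal.span {(l : ℤ)})

noncomputable def rootLat (n : ℕ) : Submodule ℤ (Fin (n + 1) → ℤ) :=
  LinearMap.ker (derAt1 n 0)

/-!
A nonzero `v ∈ A_n^{(m,l)}` of squared norm `< 2m` splits as `v = v⁺ - v⁻`, and the points
`j ∈ {0, …, n}` counted with multiplicities `v⁺_j`, resp. `v⁻_j`, form two multisets `A`, `B` in
`𝔽_l` of the same size `w < m`. Since `j^k` is an integral combination of the falling factorials
`j^(i)`, `i ≤ k` (Stirling numbers), the Craig congruences say that `A` and `B` have the same power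
sums up to degree `w`; as `w < l`, Newton's identities then give `A = B`, which is impossible
because `0, …, n` stay distinct modulo `l > n`.

The residues mod `l` of the derivative functionals of orders `1, …, m - 1` map `A_n` onto
`𝔽_l^{m-1}`, with kernel `A_n^{(m,l)}`: on the vectors `e_{k+1} - e_0` the map is triangular with
the units `(i+1)!` on the diagonal. The density bound is then `l ≤ 2n`.
-/

theorem Nat.self_mul_descFactorial (x k : ℕ) :
    x * x.descFactorial k = x.descFactorial (k + 1) + k * x.descFactorial k := by
  rcases lt_or_ge x k with h | h
  · simp [Nat.descFactorial_eq_zero_iff_lt.2 h]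
  · rw [Nat.descFactorial_succ, ← add_mul, Nat.sub_add_cancel h]

theorem Nat.pow_eq_sum_stirlingSecond_mul_descFactorial (n x : ℕ) :
    x ^ n = ∑ k ∈ range (n + 1), n.stirlingSecond k * x.descFactorial k := by
  induction n with
  | zero => simp
  | succ n ih =>
    have hshift : ∑ k ∈ range (n + 1), k * n.stirlingSecond k * x.descFactorial k
        = ∑ k ∈ range (n + 1), (k + 1) * n.stirlingSecond (k + 1) * x.descFactorial (k + 1) := by
      rw [sum_range_succ', sum_range_succ, stirlingSecond_eq_zero_of_lt n.lt_succ_self]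
      simp
    calc x ^ (n + 1)
        = ∑ k ∈ range (n + 1), n.stirlingSecond k * (x * x.descFactorial k) := by
          rw [pow_succ', ih, mul_sum]
          exact sum_congr rfl fun k _ => mul_left_comm _ _ _
      _ = ∑ k ∈ range (n + 1), n.stirlingSecond k * x.descFactorial (k + 1)
          + ∑ k ∈ range (n + 1), k * n.stirlingSecond k * x.descFactorial k := by
          rw [← sum_add_distrib]
          exact sum_congr rfl fun k _ => by rw [Nat.self_mul_descFactorial]; ring
      _ = ∑ k ∈ range (n + 1), (n + 1).stirlingSecond (k + 1) * x.descFactorial (k + 1) := by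
          simp only [hshift, stirlingSecond_succ_succ, ← sum_add_distrib]
          exact sum_congr rfl fun k _ => by ring
      _ = _ := by rw [sum_range_succ' _ (n + 1), stirlingSecond_succ_zero, zero_mul, add_zero]

namespace Multiset

variable {F : Type*}

theorem mul_esymm_eq_sum [CommRing F] (s : Multiset F) (k : ℕ) :
    k * s.esymm k = (-1) ^ (k + 1) *
      ∑ a ∈ Finset.HasAntidiagonal.antidiagonal k with a.1 < k,
        (-1) ^ a.1 * s.esymm a.1 * (s.map (· ^ a.2)).sum := by
  obtain ⟨L, rfl⟩ : ∃ L : List F, (L : Multiset F) = s := ⟨s.toList, s.coe_toList⟩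
  have hL : (univ.val.map L.get : Multiset F) = L := by
    rw [Fin.univ_val_map, List.ofFn_get]
  have hpsum (j : ℕ) : MvPolynomial.aeval L.get (MvPolynomial.psum (Fin L.length) F j)
      = ((L : Multiset F).map (· ^ j)).sum := by
    simp only [MvPolynomial.psum, map_sum, map_pow, MvPolynomial.aeval_X, ← hL, map_map]
    rfl
  have h := congrArg (MvPolynomial.aeval L.get)
    (MvPolynomial.mul_esymm_eq_sum (Fin L.length) F k)
  simpa only [map_mul, map_sum, map_pow, map_natCast, map_neg, map_one,
    MvPolynomial.aeval_esymm_eq_multiset_esymm, hL, hpsum] using h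

theorem esymm_eq_of_card_lt [CommSemiring F] {s : Multiset F} {k : ℕ} (hk : card s < k) :
    s.esymm k = 0 := by
  rw [esymm, powersetCard_eq_empty _ hk, map_zero, sum_zero]

theorem esymm_eq_of_map_pow_sum_eq [Field F] {s t : Multiset F} (hcard : card s = card t)
    (hchar : ∀ k : ℕ, 0 < k → k ≤ card s → (k : F) ≠ 0)
    (hpow : ∀ k : ℕ, 0 < k → k ≤ card s → (s.map (· ^ k)).sum = (t.map (· ^ k)).sum)
    (k : ℕ) : s.esymm k = t.esymm k := by
  induction k using Nat.strong_induction_on with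
  | _ k ih =>
    rcases Nat.eq_zero_or_pos k with rfl | hk
    · simp [esymm]
    rcases le_or_gt k (card s) with hks | hks
    · refine mul_left_cancel₀ (hchar k hk hks) ?_
      rw [mul_esymm_eq_sum, mul_esymm_eq_sum]
      congr 1
      refine sum_congr rfl fun a ha => ?_
      obtain ⟨hak, hlt⟩ : a.1 + a.2 = k ∧ a.1 < k := by simpa using ha
      rw [ih a.1 hlt, hpow a.2 (by omega) (by omega)]
    · rw [esymm_eq_of_card_lt hks, esymm_eq_of_card_lt (hcard ▸ hks)]

theorem eq_of_esymm_eq [CommRing F] [IsDomain F] {s t : Multiset F} (hcard : card s = card t)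
    (h : ∀ k, s.esymm k = t.esymm k) : s = t := by
  have hprod : (s.map fun a => Polynomial.X - Polynomial.C a).prod
      = (t.map fun a => Polynomial.X - Polynomial.C a).prod := by
    simp only [prod_X_sub_X_eq_sum_esymm, hcard, h]
  simpa only [Polynomial.roots_multiset_prod_X_sub_C] using congrArg Polynomial.roots hprod

theorem eq_of_map_pow_sum_eq [Field F] {s t : Multiset F} (hcard : card s = card t)
    (hchar : ∀ k : ℕ, 0 < k → k ≤ card s → (k : F) ≠ 0)
    (hpow : ∀ k : ℕ, 0 < k → k ≤ card s → (s.map (· ^ k)).sum = (t.map (· ^ k)).sum) :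
    s = t :=
  eq_of_esymm_eq hcard (esymm_eq_of_map_pow_sum_eq hcard hchar hpow)

end Multiset

theorem eq_zero_of_sum_mul_pow_eq_zero {ι F : Type*} [Fintype ι] [Field F] {f : ι → F}
    (hf : Function.Injective f) {v : ι → ℤ} (hsum : ∑ i, v i = 0)
    (hchar : ∀ k : ℕ, 0 < k → 2 * k ≤ ∑ i, (v i).natAbs → (k : F) ≠ 0)
    (hpow : ∀ k : ℕ, 0 < k → 2 * k ≤ ∑ i, (v i).natAbs → ∑ i, (v i : F) * f i ^ k = 0) :
    v = 0 := by
  classical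
  let weighted (c : ι → ℕ) : Multiset F := ∑ i, c i • {f i}
  have card_weighted (c : ι → ℕ) : Multiset.card (weighted c) = ∑ i, c i := by
    simp [weighted, Multiset.card_sum]
  have sum_pow_weighted (c : ι → ℕ) (k : ℕ) :
      ((weighted c).map (· ^ k)).sum = ∑ i, (c i : F) * f i ^ k := by
    change (Multiset.sumAddMonoidHom.comp (Multiset.mapAddMonoidHom (· ^ k)))
      (∑ i, c i • {f i}) = _
    simp [map_sum, Multiset.map_nsmul, Multiset.sum_nsmul, nsmul_eq_mul]
  have count_weighted (c : ι → ℕ) (j : ι) : (weighted c).count (f j) = c j := by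
    simp [weighted, Multiset.count_sum', Multiset.count_singleton, hf.eq_iff]
  set pos : ι → ℕ := fun i => (v i).toNat
  set neg : ι → ℕ := fun i => (-v i).toNat
  have hcard : ∑ i, pos i = ∑ i, neg i := by
    have : ∑ i, ((pos i : ℤ) - neg i) = 0 := by
      simpa [pos, neg, Int.toNat_sub_toNat_neg] using hsum
    rw [sum_sub_distrib, sub_eq_zero] at this
    exact_mod_cast this
  have habs : ∑ i, (v i).natAbs = 2 * ∑ i, pos i := by
    rw [two_mul]; nth_rw 2 [hcard]
    rw [← sum_add_distrib]
    exact sum_congr rfl fun i _ => (Int.toNat_add_toNat_neg_eq_natAbs (v i)).symm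
  have heq : weighted pos = weighted neg := by
    refine Multiset.eq_of_map_pow_sum_eq (by rw [card_weighted, card_weighted, hcard]) ?_ ?_
    · intro k hk hkw
      exact hchar k hk (by rw [card_weighted] at hkw; omega)
    · intro k hk hkw
      rw [sum_pow_weighted, sum_pow_weighted, ← sub_eq_zero, ← sum_sub_distrib]
      rw [card_weighted] at hkw
      convert hpow k hk (by omega) using 2 with i
      rw [← sub_mul]
      congr 1
      have h := congrArg (Int.cast : ℤ → F) (Int.toNat_sub_toNat_neg (v i))
      push_cast at h
      exact h
  funext j
  have := congrArg (Multiset.count (f j)) heq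
  simp only [count_weighted, pos, neg] at this
  simp only [Pi.zero_apply]
  omega

section CraigLattice

variable {n m l : ℕ}

theorem derAt1_apply (i : ℕ) (v : Fin (n + 1) → ℤ) :
    derAt1 n i v = ∑ j : Fin (n + 1), ((j : ℕ).descFactorial i : ℤ) * v j := by
  simp [derAt1]

theorem derAt1_single (i : ℕ) (a : Fin (n + 1)) :
    derAt1 n i (Pi.single a 1) = ((a : ℕ).descFactorial i : ℤ) := by
  simp [derAt1_apply, Pi.single_apply]

theorem mem_craigLat_iff {v : Fin (n + 1) → ℤ} :
    v ∈ craigLat n m l ↔ derAt1 n 0 v = 0 ∧ ∀ i, 0 < i → i < m → (l : ℤ) ∣ derAt1 n i v := by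
  simp [craigLat, Ideal.mem_span_singleton]

theorem dvd_sum_pow_mul_of_mem_craigLat {v : Fin (n + 1) → ℤ} (hv : v ∈ craigLat n m l) {k : ℕ}
    (hk : k < m) : (l : ℤ) ∣ ∑ j : Fin (n + 1), ((j : ℕ) : ℤ) ^ k * v j := by
  obtain ⟨hroot, hdvd⟩ := mem_craigLat_iff.1 hv
  have hexpand : ∑ j : Fin (n + 1), ((j : ℕ) : ℤ) ^ k * v j
      = ∑ i ∈ range (k + 1), (k.stirlingSecond i : ℤ) * derAt1 n i v := by
    simp_rw [derAt1_apply, mul_sum, ← mul_assoc, ← Nat.cast_mul, ← Nat.cast_pow,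
      Nat.pow_eq_sum_stirlingSecond_mul_descFactorial, Nat.cast_sum, sum_mul]
    exact sum_comm
  rw [hexpand]
  refine dvd_sum fun i hi => ?_
  rcases i.eq_zero_or_pos with rfl | hi0
  · simp [hroot]
  · exact (hdvd i hi0 (by rw [mem_range] at hi; omega)).mul_left _

theorem two_mul_le_sum_sq_of_mem_craigLat (hl : l.Prime) (hnl : n < l) (hml : m ≤ l)
    {v : Fin (n + 1) → ℤ} (hv : v ∈ craigLat n m l) (hv0 : v ≠ 0) :
    (2 * m : ℤ) ≤ ∑ j, v j ^ 2 := by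
  have := Fact.mk hl
  by_contra! hnorm
  have hsmall {k : ℕ} (hk : 2 * k ≤ ∑ j, (v j).natAbs) : k < m := by
    have : ((∑ j, (v j).natAbs : ℕ) : ℤ) ≤ ∑ j, v j ^ 2 := by
      rw [Nat.cast_sum]
      exact sum_le_sum fun j _ => Int.natAbs_le_self_sq (v j)
    omega
  refine hv0 (eq_zero_of_sum_mul_pow_eq_zero (f := fun j : Fin (n + 1) => ((j : ℕ) : ZMod l))
    ?_ ?_ ?_ ?_)
  · intro i j hij
    rw [ZMod.natCast_eq_natCast_iff', Nat.mod_eq_of_lt (by omega), Nat.mod_eq_of_lt (by omega)]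
      at hij
    exact Fin.ext hij
  · simpa [derAt1_apply] using (mem_craigLat_iff.1 hv).1
  · intro k hk hkw
    rw [Ne, ZMod.natCast_eq_zero_iff]
    exact fun hdvd => (Nat.le_of_dvd hk hdvd).not_gt ((hsmall hkw).trans_le hml)
  · intro k _ hkw
    have := (ZMod.intCast_zmod_eq_zero_iff_dvd _ l).2
      (dvd_sum_pow_mul_of_mem_craigLat hv (hsmall hkw))
    push_cast at this
    simpa only [mul_comm] using this

variable (n m l) in
noncomputable def craigResidues : (Fin (n + 1) → ℤ) →+ (Fin (m - 1) → ZMod l) :=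
  AddMonoidHom.pi fun i => (Int.castAddHom (ZMod l)).comp (derAt1 n (i + 1)).toAddMonoidHom

theorem craigLat_toAddSubgroup :
    (craigLat n m l).toAddSubgroup = (rootLat n).toAddSubgroup ⊓ (craigResidues n m l).ker := by
  ext v
  simp only [Submodule.mem_toAddSubgroup, mem_craigLat_iff, AddSubgroup.mem_inf,
    AddMonoidHom.mem_ker, rootLat, LinearMap.mem_ker, funext_iff, craigResidues]
  refine and_congr_right fun _ => ⟨fun h i => ?_, fun h i hi0 him => ?_⟩
  · simpa [ZMod.intCast_zmod_eq_zero_iff_dvd] using h (i + 1) i.succ_pos (by omega)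
  · simpa [ZMod.intCast_zmod_eq_zero_iff_dvd, Nat.sub_add_cancel hi0]
      using h ⟨i - 1, by omega⟩

theorem craigResidues_comp_subtype_surjective (hl : l.Prime) (hml : m ≤ l) (hmn : m ≤ n + 1) :
    Function.Surjective ((craigResidues n m l).comp (rootLat n).toAddSubgroup.subtype) := by
  have := Fact.mk hl
  let M : Matrix (Fin (m - 1)) (Fin (m - 1)) (ZMod l) :=
    .of fun i k => (((k : ℕ) + 1).descFactorial (i + 1) : ZMod l)
  have hM : IsUnit M := by
    have htri : M.BlockTriangular id := fun i k hki => by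
      have hki : (k : ℕ) < i := hki
      rw [show M i k = (((k : ℕ) + 1).descFactorial (i + 1) : ZMod l) from rfl,
        Nat.descFactorial_eq_zero_iff_lt.2 (by omega), Nat.cast_zero]
    rw [Matrix.isUnit_iff_isUnit_det, Matrix.det_of_isUpperTriangular htri, isUnit_iff_ne_zero,
      prod_ne_zero_iff]
    intro i _
    rw [show M i i = (((i : ℕ) + 1).descFactorial (i + 1) : ZMod l) from rfl,
      Nat.descFactorial_self, Ne, ZMod.natCast_eq_zero_iff, hl.dvd_factorial]
    omega
  let lift (s : Fin (m - 1) → ZMod l) : Fin (n + 1) → ℤ :=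
    ∑ k, ((s k).val : ℤ) • (Pi.single ⟨k + 1, by omega⟩ 1 - Pi.single 0 1)
  have lift_mem (s) : lift s ∈ rootLat n := by
    simp only [lift, rootLat, LinearMap.mem_ker, map_sum, map_zsmul, map_sub, derAt1_single]
    simp
  have residues_lift (s) : craigResidues n m l (lift s) = M.mulVec s := by
    ext i
    simp only [lift, craigResidues, AddMonoidHom.pi_apply, AddMonoidHom.comp_apply,
      LinearMap.toAddMonoidHom_coe, map_sum, map_zsmul, map_sub, derAt1_single]
    simp [M, Matrix.mulVec, dotProduct, mul_comm]
  intro t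
  obtain ⟨s, rfl⟩ := Matrix.mulVec_surjective_iff_isUnit.2 hM t
  exact ⟨⟨lift s, lift_mem s⟩, residues_lift s⟩

theorem index_craigLat_addSubgroupOf_rootLat (hl : l.Prime) (hml : m ≤ l) (hmn : m ≤ n + 1) :
    ((craigLat n m l).toAddSubgroup.addSubgroupOf (rootLat n).toAddSubgroup).index
      = l ^ (m - 1) := by
  have := Fact.mk hl
  rw [craigLat_toAddSubgroup, AddSubgroup.inf_addSubgroupOf_left, AddSubgroup.addSubgroupOf,
    AddMonoidHom.comap_ker, AddSubgroup.index_ker,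
    AddMonoidHom.range_eq_top.2 (craigResidues_comp_subtype_surjective hl hml hmn)]
  simp

end CraigLattice

noncomputable def centerDensity (n : ℕ) (μ V : ℝ) : ℝ := (Real.sqrt μ / 2) ^ n / V

theorem centerDensity_two_mul {m : ℝ} (hm : 0 ≤ m) (n : ℕ) (V : ℝ) :
    centerDensity n (2 * m) V = m ^ ((n : ℝ) / 2) / (2 ^ ((n : ℝ) / 2) * V) := by
  have hsq : (Real.sqrt (2 * m) / 2) ^ 2 = m / 2 := by
    rw [div_pow, Real.sq_sqrt (by positivity)]
    ring
  have hpow : (Real.sqrt (2 * m) / 2) ^ n = (m / 2) ^ ((n : ℝ) / 2) := by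
    rw [← hsq, ← Real.rpow_natCast, ← Real.rpow_natCast _ 2, ← Real.rpow_mul (by positivity)]
    ring_nf
  rw [centerDensity, hpow, Real.div_rpow hm zero_le_two, div_div]

theorem rpow_div_le_centerDensity {n m l : ℕ} (hm : 0 < m) (hl : 0 < l) (hl2n : l ≤ 2 * n) :
    (m : ℝ) ^ ((n : ℝ) / 2) /
        ((2 : ℝ) ^ ((m : ℝ) - 1 + (n : ℝ) / 2) * (n : ℝ) ^ (m - 1) * Real.sqrt (n + 1))
      ≤ centerDensity n (2 * m) ((l : ℝ) ^ (m - 1) * Real.sqrt (n + 1)) := by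
  have hden : (2 : ℝ) ^ ((m : ℝ) - 1 + (n : ℝ) / 2) * (n : ℝ) ^ (m - 1)
      = 2 ^ ((n : ℝ) / 2) * (2 * n : ℝ) ^ (m - 1) := by
    rw [Real.rpow_add two_pos, ← Nat.cast_pred hm, Real.rpow_natCast, mul_pow]
    ring
  have hl2n : (l : ℝ) ≤ 2 * n := by exact_mod_cast hl2n
  rw [centerDensity_two_mul m.cast_nonneg, hden, mul_assoc]
  gcongr

/-- Bertrand's postulate: for every `n ≥ 1` there is a prime `l` with `n < l ≤ 2n`;
consequently for each `n` and `m < n/2` there is a rank-`n` lattice (the analogous Craig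
lattice `A_n^{(m,l)}`, with minimum squared norm `≥ 2m` and index `l^{m-1}` in the root
lattice `A_n`) whose center density is at least
`m^{n/2} / (2^{m-1+n/2} n^{m-1} (n+1)^{1/2})`. -/
theorem bertrand_and_craig_density :
    (∀ n : ℕ, 0 < n → ∃ l : ℕ, l.Prime ∧ n < l ∧ l ≤ 2 * n) ∧
    (∀ n m : ℕ, 0 < m → 2 * m < n →
      ∃ l : ℕ, l.Prime ∧ n < l ∧ l ≤ 2 * n ∧
        (∀ v ∈ craigLat n m l, v ≠ 0 → (2 * m : ℤ) ≤ ∑ j, (v j) ^ 2) ∧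
        (((craigLat n m l).toAddSubgroup).addSubgroupOf ((rootLat n).toAddSubgroup)).index
          = l ^ (m - 1) ∧
        (Real.sqrt (2 * m) / 2) ^ n / ((l : ℝ) ^ (m - 1) * Real.sqrt (n + 1))
          ≥ (m : ℝ) ^ ((n : ℝ) / 2) /
              ((2 : ℝ) ^ ((m : ℝ) - 1 + (n : ℝ) / 2) * (n : ℝ) ^ (m - 1) *
                Real.sqrt (n + 1))) := by
  refine ⟨fun n hn => Nat.exists_prime_lt_and_le_two_mul n hn.ne', fun n m hm hmn => ?_⟩
  obtain ⟨l, hl, hnl, hl2n⟩ := Nat.exists_prime_lt_and_le_two_mul n (by omega)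
  exact ⟨l, hl, hnl, hl2n,
    fun v hv hv0 => two_mul_le_sum_sq_of_mem_craigLat hl hnl (by omega) hv hv0,
    index_craigLat_addSubgroupOf_rootLat hl (by omega) (by omega),
    rpow_div_le_centerDensity hm hl.pos hl2n⟩
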